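/- For a bilinear form k on a Euclidean vector space and p ≥ 2, the contraction of its p-th exterior power satisfies c(k^p) = p·(c k)·k^{p-1} − p(p-1)·(k∘k)·k^{p-2}, where c is the Ricci contraction, products of double forms are exterior products, and k∘k is the composition product (corresponding to the square of the associated endomorphism). -/

import Mathlib

/-
Double forms on the Euclidean space ℝⁿ, following Labbi's formalism.
A (p,q) double form is modelled as a real-valued function of a p-tuple and a
q-tuple of vectors (the relevant ones being those multilinear and alternating
in each block, i.e. bilinear forms on Λ^p V × Λ^q V).
-/

open scoped BigOperators RealInnerProductSpace

noncomputable section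

abbrev EucV (n : ℕ) := EuclideanSpace ℝ (Fin n)

/-- A (p,q) double form on ℝⁿ: a bilinear form on Λ^p V × Λ^q V, viewed as a
multilinear form skew-symmetric in the first p and in the last q arguments. -/
abbrev DF (n p q : ℕ) := (Fin p → EucV n) → (Fin q → EucV n) → ℝ

variable {n : ℕ}

/-- standard orthonormal basis of ℝⁿ -/
def bv (n : ℕ) (i : Fin n) : EucV n := EuclideanSpace.single i 1

/-- strictly increasing multi-indices of length p -/
def Incr (n p : ℕ) : Finset (Fin p → Fin n) :=
  Finset.univ.filter (fun f => ∀ a b : Fin p, a < b → f a < f b)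

/-- sign of a permutation, as a real number -/
def sgn {m : ℕ} (σ : Equiv.Perm (Fin m)) : ℝ := ((Equiv.Perm.sign σ : ℤ) : ℝ)

/-- exterior product of double forms:
(θ₁⊗θ₂)(θ₃⊗θ₄) = (θ₁∧θ₃)⊗(θ₂∧θ₄). -/
def extMul {p q r s : ℕ} (ω : DF n p q) (η : DF n r s) : DF n (p + r) (q + s) :=
  fun x y =>
    (p.factorial * r.factorial * q.factorial * s.factorial : ℝ)⁻¹ *
      ∑ σ : Equiv.Perm (Fin (p + r)), ∑ τ : Equiv.Perm (Fin (q + s)),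
        sgn σ * sgn τ *
          (ω (fun i => x (σ (Fin.castAdd r i))) (fun j => y (τ (Fin.castAdd s j))) *
            η (fun i => x (σ (Fin.natAdd p i))) (fun j => y (τ (Fin.natAdd q j))))

/-- composition (Greub) product of double forms: for ω₁ ∈ D^{p,q}, ω₂ ∈ D^{r,p},
(ω₁ ∘ ω₂)(u,v) = Σ_{i₁<…<i_p} ω₂(u, e_I) ω₁(e_I, v); it corresponds to the
composition of the associated operators on ΛV. -/
def compDF {p q r : ℕ} (ω₁ : DF n p q) (ω₂ : DF n r p) : DF n r q :=
  fun u v => ∑ f ∈ Incr n p, ω₂ u (fun i => bv n (f i)) * ω₁ (fun i => bv n (f i)) v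

/-- transpose of a double form -/
def transDF {p q : ℕ} (ω : DF n p q) : DF n q p := fun u v => ω v u

/-- re-indexing cast of a double form -/
def castDF {p q p' q' : ℕ} (hp : p = p') (hq : q = q') (ω : DF n p q) : DF n p' q' :=
  fun x y => ω (x ∘ Fin.cast hp) (y ∘ Fin.cast hq)

/-- Ricci contraction of double forms -/
def contractDF {p q : ℕ} (ω : DF n (p + 1) (q + 1)) : DF n p q :=
  fun x y => ∑ i : Fin n, ω (Fin.cons (bv n i) x) (Fin.cons (bv n i) y)

/-- iterated contraction c^k -/
def contractIterDF {p q : ℕ} : (k : ℕ) → DF n (p + k) (q + k) → DF n p q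
  | 0, ω => ω
  | k + 1, ω => contractIterDF k (contractDF ω)

/-- interior product i_ψ of double forms (the adjoint of left exterior
multiplication by ψ): for ψ ∈ D^{r,s} and ω ∈ D^{r+p,s+q},
(i_ψ ω)(x;y) = Σ_{I,J increasing} ψ(e_I;e_J) ω(e_I,x;e_J,y). -/
def interiorDF {r s p q : ℕ} (ψ : DF n r s) (ω : DF n (r + p) (s + q)) : DF n p q :=
  fun x y =>
    ∑ f ∈ Incr n r, ∑ g ∈ Incr n s,
      ψ (fun i => bv n (f i)) (fun j => bv n (g j)) *
        ω (Fin.append (fun i => bv n (f i)) x) (Fin.append (fun j => bv n (g j)) y)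

/-- inner product of (p,q) double forms, induced by the inner products of the
exterior powers -/
def innerDF {p q : ℕ} (ω η : DF n p q) : ℝ :=
  ∑ f ∈ Incr n p, ∑ g ∈ Incr n q,
    ω (fun i => bv n (f i)) (fun j => bv n (g j)) *
      η (fun i => bv n (f i)) (fun j => bv n (g j))

/-- the metric of ℝⁿ as a (1,1) double form -/
def gDF (n : ℕ) : DF n 1 1 := fun u v => (inner ℝ (u 0) (v 0) : ℝ)

/-- exterior powers of a (1,1) double form -/
def powDF (h : DF n 1 1) : (p : ℕ) → DF n p p
  | 0 => fun _ _ => 1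
  | p + 1 => extMul (powDF h p) h

/-- exterior product h₁h₂⋯h_p of a family of (1,1) double forms -/
def extProdDF : {p : ℕ} → (Fin p → DF n 1 1) → DF n p p
  | 0, _ => fun _ _ => 1
  | p + 1, h => extMul (extProdDF fun i => h i.castSucc) (h (Fin.last p))

/-- determinant (volume form) of an n-tuple of vectors of ℝⁿ -/
def volDF (n : ℕ) (v : Fin n → EucV n) : ℝ :=
  Matrix.det (Matrix.of fun i j => (inner ℝ (bv n i) (v j) : ℝ))

/-- double Hodge star operator on double forms:
*(θ₁⊗θ₂) = (*θ₁)⊗(*θ₂), given here by the classical formula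
(*α)(x) = Σ_{I increasing} α(e_I) vol(e_I, x) applied in each slot. -/
def starDF {p q : ℕ} (hp : p ≤ n) (hq : q ≤ n) (ω : DF n p q) : DF n (n - p) (n - q) :=
  fun x y =>
    ∑ f ∈ Incr n p, ∑ g ∈ Incr n q,
      ω (fun i => bv n (f i)) (fun j => bv n (g j)) *
        volDF n (Fin.append (fun i => bv n (f i)) x ∘ Fin.cast (Nat.add_sub_cancel' hp).symm) *
        volDF n (Fin.append (fun j => bv n (g j)) y ∘ Fin.cast (Nat.add_sub_cancel' hq).symm)

/-- the endomorphism h̄ associated to a bilinear form h: ⟪h̄ v, w⟫ = h(v,w) -/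
def hbar (h : DF n 1 1) (v : EucV n) : EucV n :=
  ∑ j : Fin n, h ![v] ![bv n j] • bv n j

/-- the adjoint endomorphism h̄*: ⟪v, h̄* w⟫ = h(v,w) -/
def hbarAdj (h : DF n 1 1) (v : EucV n) : EucV n :=
  ∑ i : Fin n, h ![bv n i] ![v] • bv n i

/-- the right extension ĥ_R = id ⊗ ĥ of (the exterior-algebra extension ĥ of) h̄,
acting on double forms via the metric identification with double vectors -/
def hhatR {p q : ℕ} (h : DF n 1 1) (ω : DF n p q) : DF n p q :=
  fun x y => ω x (fun j => hbarAdj h (y j))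

/-- determinant of (the endomorphism associated to) a bilinear form -/
def detDF (h : DF n 1 1) : ℝ :=
  Matrix.det (Matrix.of fun i j : Fin n => h ![bv n i] ![bv n j])

/-- omit one member of a family -/
def omit1 {α : Sort*} {p : ℕ} (h : Fin (p + 1) → α) (j : Fin (p + 1)) : Fin p → α :=
  fun i => h (j.succAbove i)

/-- omit two members of a family -/
def omit2 {α : Sort*} {p : ℕ} (h : Fin (p + 2) → α) (j k : Fin (p + 2)) (hjk : j < k) :
    Fin p → α :=
  omit1 (omit1 h k) ⟨j.1, by have h1 : j.1 < k.1 := hjk; have h2 : k.1 < p + 2 := k.isLt; omega⟩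

/-- the first Bianchi map 𝔖 : D^{p,q+1} → D^{p+1,q} -/
def bianchiDF {p q : ℕ} (ω : DF n p (q + 1)) : DF n (p + 1) q :=
  fun x y =>
    (p.factorial : ℝ)⁻¹ *
      ∑ σ : Equiv.Perm (Fin (p + 1)),
        sgn σ * ω (fun i => x (σ i.castSucc)) (Fin.cons (x (σ (Fin.last p))) y)

/-- the alternating operator Alt : D^{p,p} → Λ^{2p} -/
def altDF {p : ℕ} (ω : DF n p p) : (Fin (p + p) → EucV n) → ℝ :=
  fun v =>
    ((p + p).factorial : ℝ)⁻¹ *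
      ∑ σ : Equiv.Perm (Fin (p + p)),
        sgn σ * ω (fun i => v (σ (Fin.castAdd p i))) (fun i => v (σ (Fin.natAdd p i)))

/-- exterior powers of a (2,2) double form -/
def pow2DF (R : DF n 2 2) : (k : ℕ) → DF n (2 * k) (2 * k)
  | 0 => fun _ _ => 1
  | k + 1 => extMul (pow2DF R k) R

/-- the diagonal simple double form (v₁∧…∧v_p) ⊗ (v₁∧…∧v_p), as a bilinear form -/
def simpleDiag {p : ℕ} (v : Fin p → EucV n) : DF n p p :=
  fun x y =>
    Matrix.det (Matrix.of fun i j => (inner ℝ (v i) (x j) : ℝ)) *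
      Matrix.det (Matrix.of fun i j => (inner ℝ (v i) (y j) : ℝ))


/-
Everything is computed through Gram matrices `G = (k(x_a, y_b))_{a,b}`. Writing an exterior
product of double forms as an (unnormalised) antisymmetrisation in both slots, the product of two
antisymmetrised forms is the antisymmetrisation of their tensor product: the factorials in
`extMul` are absorbed by reindexing `σ ↦ σ ∘ (α ⊕ β)`. Hence `k^p(x, y) = p! det G`, and
`(h k^m)(x, y) = m! tr(adj G · H)` with `H` the Gram matrix of `h` (expand along the `h`-column and
use Cramer's rule). On the other side, `c(k^{m+2})(x, y)` is `(m+2)!` times the sum over `i` of the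
determinants of `G` bordered by `e_i`; expanding along the border gives
`k(e_i, e_i) det G - Σ_{a,b} k(x_a, e_i) k(e_i, y_b) adj(G)_{ba}`, and summing over `i` produces
`(c k) det G - tr(adj G · (k∘k))`.
-/

open Equiv Finset Matrix

theorem sgn_mul {m : ℕ} (σ τ : Perm (Fin m)) : sgn (σ * τ) = sgn σ * sgn τ := by
  simp [sgn, Perm.sign_mul]

theorem sgn_mul_self {m : ℕ} (σ : Perm (Fin m)) : sgn σ * sgn σ = 1 := by
  rcases Int.units_eq_one_or (Perm.sign σ) with h | h <;> simp [sgn, h]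

def sumCongrFin {p r : ℕ} (α : Perm (Fin p)) (β : Perm (Fin r)) : Perm (Fin (p + r)) :=
  finSumFinEquiv.permCongr (α.sumCongr β)

@[simp]
theorem sumCongrFin_castAdd {p r : ℕ} (α : Perm (Fin p)) (β : Perm (Fin r)) (i : Fin p) :
    sumCongrFin α β (Fin.castAdd r i) = Fin.castAdd r (α i) := by
  simp [sumCongrFin, permCongr_apply]

@[simp]
theorem sumCongrFin_natAdd {p r : ℕ} (α : Perm (Fin p)) (β : Perm (Fin r)) (j : Fin r) :
    sumCongrFin α β (Fin.natAdd p j) = Fin.natAdd p (β j) := by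
  simp [sumCongrFin, permCongr_apply]

theorem sgn_sumCongrFin {p r : ℕ} (α : Perm (Fin p)) (β : Perm (Fin r)) :
    sgn (sumCongrFin α β) = sgn α * sgn β := by
  simp [sumCongrFin, sgn, Perm.sign_permCongr, Perm.sign_sumCongr]

theorem sum_sum_sum_mul_sumCongrFin {M : Type*} [AddCommMonoid M] {p r : ℕ}
    (f : Perm (Fin (p + r)) → M) :
    ∑ σ, ∑ α : Perm (Fin p), ∑ β : Perm (Fin r), f (σ * sumCongrFin α β) =
      (p.factorial * r.factorial) • ∑ σ, f σ := by
  calc ∑ σ, ∑ α : Perm (Fin p), ∑ β : Perm (Fin r), f (σ * sumCongrFin α β)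
      = ∑ α : Perm (Fin p), ∑ β : Perm (Fin r), ∑ σ, f (σ * sumCongrFin α β) := by
        rw [sum_comm]
        exact sum_congr rfl fun _ _ => sum_comm
    _ = ∑ _α : Perm (Fin p), ∑ _β : Perm (Fin r), ∑ σ, f σ :=
        sum_congr rfl fun α _ => sum_congr rfl fun β _ =>
          Equiv.sum_comp (Equiv.mulRight (sumCongrFin α β)) f
    _ = (p.factorial * r.factorial) • ∑ σ, f σ := by
        simp [Fintype.card_perm, mul_smul]

theorem sum_perm_apply_zero {M : Type*} [AddCommMonoid M] {N : ℕ} (f : Fin (N + 1) → M) :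
    ∑ τ : Perm (Fin (N + 1)), f (τ 0) = N.factorial • ∑ b, f b := by
  rw [← Perm.decomposeFin.symm.sum_comp, Fintype.sum_prod_type]
  simp [Perm.decomposeFin_symm_apply_zero, Fintype.card_perm, smul_sum]

theorem det_succ_eq_sub_sum_adjugate {R : Type*} [CommRing R] {N : ℕ}
    (M : Matrix (Fin (N + 2)) (Fin (N + 2)) R) :
    M.det = M 0 0 * (M.submatrix Fin.succ Fin.succ).det -
      ∑ a : Fin (N + 1), ∑ b : Fin (N + 1),
        M a.succ 0 * M 0 b.succ * adjugate (M.submatrix Fin.succ Fin.succ) b a := by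
  rw [det_succ_column_zero, Fin.sum_univ_succ, sub_eq_add_neg, ← sum_neg_distrib]
  congr 1
  · simp
  refine sum_congr rfl fun a _ => ?_
  rw [det_succ_row_zero, mul_sum, ← sum_neg_distrib]
  refine sum_congr rfl fun b _ => ?_
  rw [adjugate_fin_succ_eq_det_submatrix]
  have hminor : (M.submatrix a.succ.succAbove Fin.succ).submatrix Fin.succ b.succAbove =
      (M.submatrix Fin.succ Fin.succ).submatrix a.succAbove b.succAbove := by
    ext; simp
  simp only [submatrix_apply, Fin.succ_succAbove_zero, Fin.val_succ, hminor]
  ring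

theorem det_updateCol_eq_adjugate_mul {R ι : Type*} [CommRing R] [Fintype ι] [DecidableEq ι]
    (B H : Matrix ι ι R) (b : ι) :
    (B.updateCol b fun i => H i b).det = (adjugate B * H) b b := by
  rw [← cramer_apply, cramer_eq_adjugate_mulVec]
  rfl

theorem sum_sgn_mul_prod_eq_sgn_mul_det {p : ℕ} (C : Matrix (Fin p) (Fin p) ℝ)
    (τ : Perm (Fin p)) :
    ∑ σ : Perm (Fin p), sgn σ * ∏ c, C (σ c) (τ c) = sgn τ * C.det := by
  rw [sgn, ← det_permute', det_apply']
  rfl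

theorem sum_sgn_mul_sgn_mul_prod_eq_factorial_mul_det {p : ℕ} (B : Matrix (Fin p) (Fin p) ℝ) :
    ∑ σ : Perm (Fin p), ∑ τ : Perm (Fin p), sgn σ * sgn τ * ∏ c, B (σ c) (τ c) =
      p.factorial * B.det := by
  rw [sum_comm]
  simp_rw [mul_right_comm _ (sgn _), ← sum_mul, sum_sgn_mul_prod_eq_sgn_mul_det,
    mul_right_comm, sgn_mul_self, one_mul]
  simp [Fintype.card_perm]

theorem sum_sgn_mul_sgn_mul_prod_succ_eq_factorial_mul_trace {N : ℕ}
    (B H : Matrix (Fin (N + 1)) (Fin (N + 1)) ℝ) :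
    ∑ σ : Perm (Fin (N + 1)), ∑ τ : Perm (Fin (N + 1)),
        sgn σ * sgn τ * (H (σ 0) (τ 0) * ∏ j : Fin N, B (σ j.succ) (τ j.succ)) =
      N.factorial * trace (adjugate B * H) := by
  have hcol (τ : Perm (Fin (N + 1))) :
      ∑ σ : Perm (Fin (N + 1)), sgn σ * (H (σ 0) (τ 0) * ∏ j : Fin N, B (σ j.succ) (τ j.succ)) =
        sgn τ * (B.updateCol (τ 0) fun i => H i (τ 0)).det := by
    rw [← sum_sgn_mul_prod_eq_sgn_mul_det]
    simp [Fin.prod_univ_succ, updateCol_apply]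
  rw [sum_comm]
  simp_rw [mul_right_comm _ (sgn _), ← sum_mul, hcol, det_updateCol_eq_adjugate_mul,
    mul_right_comm, sgn_mul_self, one_mul, sum_perm_apply_zero (fun b => (adjugate B * H) b b),
    nsmul_eq_mul, trace]
  rfl

def skewDF {p q : ℕ} (F : DF n p q) : DF n p q :=
  fun x y => ∑ σ : Perm (Fin p), ∑ τ : Perm (Fin q), sgn σ * sgn τ * F (x ∘ σ) (y ∘ τ)

def gramDF {p q : ℕ} (h : DF n 1 1) (x : Fin p → EucV n) (y : Fin q → EucV n) :
    Matrix (Fin p) (Fin q) ℝ :=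
  Matrix.of fun a b => h ![x a] ![y b]

theorem fin_one_eq_vecCons {α : Type*} (f : Fin 1 → α) : f = ![f 0] := by
  funext i
  rw [Subsingleton.elim i 0]
  rfl

theorem skewDF_eq_self (h : DF n 1 1) : skewDF h = h := by
  funext x y
  simp [skewDF, sgn]

theorem extMul_skewDF {p q r s : ℕ} (F : DF n p q) (G : DF n r s) :
    extMul (skewDF F) (skewDF G) =
      skewDF fun x y => F (x ∘ Fin.castAdd r) (y ∘ Fin.castAdd s) *
        G (x ∘ Fin.natAdd p) (y ∘ Fin.natAdd q) := by
  funext x y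
  set Θ : Perm (Fin (p + r)) → Perm (Fin (q + s)) → ℝ := fun σ τ =>
    sgn σ * sgn τ * (F (x ∘ σ ∘ Fin.castAdd r) (y ∘ τ ∘ Fin.castAdd s) *
      G (x ∘ σ ∘ Fin.natAdd p) (y ∘ τ ∘ Fin.natAdd q)) with hΘ
  have hexpand (σ : Perm (Fin (p + r))) (τ : Perm (Fin (q + s))) : sgn σ * sgn τ *
      (skewDF F (fun i => x (σ (Fin.castAdd r i))) (fun j => y (τ (Fin.castAdd s j))) *
        skewDF G (fun i => x (σ (Fin.natAdd p i))) (fun j => y (τ (Fin.natAdd q j)))) =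
      ∑ α : Perm (Fin p), ∑ γ : Perm (Fin r), ∑ β : Perm (Fin q), ∑ δ : Perm (Fin s),
        Θ (σ * sumCongrFin α γ) (τ * sumCongrFin β δ) := by
    simp only [skewDF]
    simp only [sum_mul_sum]
    simp only [mul_sum]
    refine sum_congr rfl fun α _ => sum_congr rfl fun γ _ => sum_congr rfl fun β _ =>
      sum_congr rfl fun δ _ => ?_
    simp only [hΘ, sgn_mul, sgn_sumCongrFin, Function.comp_def, Perm.mul_apply,
      sumCongrFin_castAdd, sumCongrFin_natAdd]
    ring
  have hcollapse :
      ∑ σ, ∑ τ, ∑ α : Perm (Fin p), ∑ γ : Perm (Fin r), ∑ β : Perm (Fin q), ∑ δ : Perm (Fin s),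
          Θ (σ * sumCongrFin α γ) (τ * sumCongrFin β δ) =
        (p.factorial * r.factorial * q.factorial * s.factorial : ℝ) * ∑ σ, ∑ τ, Θ σ τ := by
    calc _ = ∑ σ, ∑ α : Perm (Fin p), ∑ γ : Perm (Fin r),
          ∑ τ, ∑ β : Perm (Fin q), ∑ δ : Perm (Fin s),
            Θ (σ * sumCongrFin α γ) (τ * sumCongrFin β δ) :=
          sum_congr rfl fun σ _ => by
            rw [sum_comm]
            exact sum_congr rfl fun _ _ => sum_comm
      _ = ∑ σ, ∑ α : Perm (Fin p), ∑ γ : Perm (Fin r),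
          (q.factorial * s.factorial) • ∑ τ, Θ (σ * sumCongrFin α γ) τ := by
          simp_rw [sum_sum_sum_mul_sumCongrFin]
      _ = (p.factorial * r.factorial) • ∑ σ, (q.factorial * s.factorial) • ∑ τ, Θ σ τ :=
          sum_sum_sum_mul_sumCongrFin fun σ => (q.factorial * s.factorial) • ∑ τ, Θ σ τ
      _ = _ := by
          simp only [nsmul_eq_mul, Nat.cast_mul, mul_sum]
          exact sum_congr rfl fun _ _ => sum_congr rfl fun _ _ => by ring
  simp only [extMul, hexpand, hcollapse]
  rw [← mul_assoc, inv_mul_cancel₀ (by positivity), one_mul]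
  rfl

theorem powDF_eq_skewDF (k : DF n 1 1) (p : ℕ) :
    powDF k p = skewDF fun x y => ∏ i, k ![x i] ![y i] := by
  induction p with
  | zero =>
    funext x y
    simp [powDF, skewDF, sgn]
  | succ p ih =>
    calc powDF k (p + 1) = extMul (skewDF fun x y => ∏ i, k ![x i] ![y i]) (skewDF k) := by
          rw [skewDF_eq_self, powDF, ih]
      _ = _ := by
          rw [extMul_skewDF]
          congr
          funext x y
          have hlast : Fin.natAdd p (0 : Fin 1) = Fin.last p := by ext; simp
          rw [Fin.prod_univ_castSucc, fin_one_eq_vecCons (x ∘ _), fin_one_eq_vecCons (y ∘ _)]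
          simp [hlast, Fin.castSucc]

theorem powDF_apply (k : DF n 1 1) {p : ℕ} (x y : Fin p → EucV n) :
    powDF k p x y = p.factorial * (gramDF k x y).det := by
  rw [powDF_eq_skewDF, ← sum_sgn_mul_sgn_mul_prod_eq_factorial_mul_det]
  rfl

theorem castDF_skewDF {p q p' q' : ℕ} (hp : p = p') (hq : q = q') (F : DF n p q) :
    castDF hp hq (skewDF F) = skewDF (castDF hp hq F) := by
  subst hp hq
  rfl

theorem castDF_extMul_powDF_apply (h k : DF n 1 1) {m : ℕ} (x y : Fin (m + 1) → EucV n) :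
    castDF (Nat.add_comm 1 m) (Nat.add_comm 1 m) (extMul h (powDF k m)) x y =
      m.factorial * trace (adjugate (gramDF k x y) * gramDF h x y) := by
  have hskew : extMul h (powDF k m) =
      extMul (skewDF h) (skewDF fun x y => ∏ i, k ![x i] ![y i]) := by
    rw [skewDF_eq_self, powDF_eq_skewDF]
  rw [hskew, extMul_skewDF, castDF_skewDF,
    ← sum_sgn_mul_sgn_mul_prod_succ_eq_factorial_mul_trace]
  refine sum_congr rfl fun σ _ => sum_congr rfl fun τ _ => ?_
  have h0 : Fin.cast (Nat.add_comm 1 m) (Fin.castAdd m 0) = 0 := by ext; simp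
  have hsucc (j : Fin m) : Fin.cast (Nat.add_comm 1 m) (Fin.natAdd 1 j) = j.succ := by
    ext; simp
  rw [castDF, fin_one_eq_vecCons (((x ∘ σ) ∘ Fin.cast _) ∘ Fin.castAdd m),
    fin_one_eq_vecCons (((y ∘ τ) ∘ Fin.cast _) ∘ Fin.castAdd m)]
  simp [h0, hsucc, gramDF]

theorem compDF_apply (h k : DF n 1 1) (u v : Fin 1 → EucV n) :
    compDF h k u v = ∑ i, k u ![bv n i] * h ![bv n i] v := by
  have hIncr : Incr n 1 = univ := filter_true_of_mem fun f _ a b hab => by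
    simp [Subsingleton.elim a b] at hab
  rw [compDF, hIncr, ← (Equiv.funUnique (Fin 1) (Fin n)).symm.sum_comp]
  refine sum_congr rfl fun i _ => ?_
  have hvec : (fun j => bv n ((Equiv.funUnique (Fin 1) (Fin n)).symm i j)) = ![bv n i] :=
    fin_one_eq_vecCons _
  rw [hvec]

theorem sum_det_gramDF_cons (k : DF n 1 1) {m : ℕ} (x y : Fin (m + 1) → EucV n) :
    ∑ i, (gramDF k (Fin.cons (bv n i) x) (Fin.cons (bv n i) y)).det =
      contractDF k Fin.elim0 Fin.elim0 * (gramDF k x y).det -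
        trace (adjugate (gramDF k x y) * gramDF (compDF k k) x y) := by
  have hminor (u v : EucV n) :
      (gramDF k (Fin.cons u x) (Fin.cons v y)).submatrix Fin.succ Fin.succ = gramDF k x y := by
    ext; simp [gramDF]
  simp_rw [det_succ_eq_sub_sum_adjugate, hminor, sum_sub_distrib, ← sum_mul]
  congr 1
  simp only [trace, Matrix.diag, mul_apply, gramDF, compDF_apply, mul_sum, of_apply,
    Fin.cons_zero, Fin.cons_succ]
  rw [sum_comm_cycle]
  refine sum_congr rfl fun b _ => ?_
  rw [sum_comm]
  exact sum_congr rfl fun a _ => sum_congr rfl fun i _ => by ring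

/-- c(k^p) = p (c k) k^{p-1} − p(p-1) (k∘k) k^{p-2} for p ≥ 2
(here p = m+2). -/
theorem stmt17 (n m : ℕ) (k : DF n 1 1) :
    contractDF (powDF k (m + 2)) =
      (((m + 2 : ℕ) : ℝ) * contractDF k Fin.elim0 Fin.elim0) • powDF k (m + 1) -
        (((m + 2 : ℕ) : ℝ) * ((m + 1 : ℕ) : ℝ)) •
          castDF (show 1 + m = m + 1 by omega) (show 1 + m = m + 1 by omega)
            (extMul (compDF k k) (powDF k m)) := by
  funext x y
  have hcontract : contractDF (powDF k (m + 2)) x y =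
      (m + 2).factorial * ∑ i, (gramDF k (Fin.cons (bv n i) x) (Fin.cons (bv n i) y)).det := by
    simp only [contractDF, powDF_apply, mul_sum]
  simp only [Pi.sub_apply, Pi.smul_apply, smul_eq_mul, hcontract, sum_det_gramDF_cons,
    powDF_apply, castDF_extMul_powDF_apply]
  rw [Nat.factorial_succ (m + 1), Nat.factorial_succ m]
  push_cast
  ring
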